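/- arXiv:2504.02088 — 3 statements merged into one kernel-verified Lean document; each statement's English description precedes it below -/
import Mathlib

section
/- Let G be a connected finite simple graph on a nonempty vertex set V. Fix r ∈ ℕ. For each vertex v ∈ V, let n_v ∈ ℕ, let A_v be a real r × n_v matrix, and let x_v ∈ ℝ^{n_v}. Let c ∈ ℝ^r and let C : V → ℝ^r satisfy ∑_{v ∈ V} C_v = c. Then the globally coupled constraint ∑_{v ∈ V} A_v x_v + c ≤ 0 (componentwise) holds if and only if there exists z : V → ℝ^r such that for every vertex v ∈ V, A_v x_v + ∑_{u ∈ N(v)} (z_v − z_u) + C_v ≤ 0 (componentwise), where N(v) is the set of neighbors of v in G. -/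
/-!
The sums `∑ u ∈ N(v), (z v - z u)` are the graph Laplacian applied to `z`, and they add up to
zero over all vertices, so summing the local constraints recovers the global one. Conversely,
on a connected graph the kernel of the Laplacian is the line of constants, so by rank–nullity
its range is exactly the space of vectors summing to zero. Hence `z` can be chosen so that
every vertex carries the same local slack `s / |V|`, where `s = ∑ v, A v x v + c ≤ 0`.
-/

open Finset Matrix

namespace SimpleGraph

variable {V : Type*} [Fintype V] (G : SimpleGraph V) [DecidableRel G.Adj]

theorem sum_sum_neighborFinset_sub {M : Type*} [AddCommGroup M] (z : V → M) :
    ∑ v, ∑ u ∈ G.neighborFinset v, (z v - z u) = 0 := by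
  have hswap : ∑ v, ∑ u ∈ G.neighborFinset v, z u = ∑ v, ∑ u ∈ G.neighborFinset v, z v :=
    Finset.sum_comm' fun v u => by simp [G.adj_comm]
  simp only [Finset.sum_sub_distrib, hswap, sub_self]

theorem lapMatrix_mulVec_apply_eq_sum_neighborFinset_sub [DecidableEq V] {R : Type*} [CommRing R]
    (f : V → R) (v : V) :
    (G.lapMatrix R *ᵥ f) v = ∑ u ∈ G.neighborFinset v, (f v - f u) := by
  rw [lapMatrix_mulVec_apply, Finset.sum_sub_distrib, Finset.sum_const,
    card_neighborFinset_eq_degree, nsmul_eq_mul]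

theorem range_toLin'_lapMatrix [DecidableEq V] (hG : G.Connected) :
    LinearMap.range (G.lapMatrix ℝ).toLin' =
      LinearMap.ker (Fintype.linearCombination ℝ fun _ : V => (1 : ℝ)) := by
  set σ := Fintype.linearCombination ℝ fun _ : V => (1 : ℝ)
  have hσ : ∀ d, σ d = ∑ v, d v := fun d => by simp [σ, Fintype.linearCombination_apply]
  have hle : LinearMap.range (G.lapMatrix ℝ).toLin' ≤ LinearMap.ker σ := by
    rintro _ ⟨w, rfl⟩
    simp only [LinearMap.mem_ker, hσ, toLin'_apply,
      lapMatrix_mulVec_apply_eq_sum_neighborFinset_sub, sum_sum_neighborFinset_sub]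
  have hker : Module.finrank ℝ (LinearMap.ker (G.lapMatrix ℝ).toLin') = 1 := by
    have := hG.preconnected.subsingleton_connectedComponent
    rw [← card_connectedComponent_eq_finrank_ker_toLin'_lapMatrix, Fintype.card_eq_one_iff]
    exact ⟨G.connectedComponentMk hG.nonempty.some, fun _ => Subsingleton.elim _ _⟩
  have hσ_surj : LinearMap.range σ = ⊤ := by
    obtain ⟨v₀⟩ := hG.nonempty
    refine LinearMap.range_eq_top.2 fun t => ⟨Pi.single v₀ t, ?_⟩
    simp [hσ]
  refine Submodule.eq_of_le_of_finrank_eq hle ?_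
  have h₁ := LinearMap.finrank_range_add_finrank_ker (G.lapMatrix ℝ).toLin'
  have h₂ := LinearMap.finrank_range_add_finrank_ker σ
  rw [hσ_surj, finrank_top, Module.finrank_self] at h₂
  omega

theorem exists_forall_sum_neighborFinset_sub_eq (hG : G.Connected) {ι : Type*}
    (d : V → ι → ℝ) (hd : ∑ v, d v = 0) :
    ∃ z : V → ι → ℝ, ∀ v, ∑ u ∈ G.neighborFinset v, (z v - z u) = d v := by
  classical
  have hrange : ∀ i, (d · i) ∈ LinearMap.range (G.lapMatrix ℝ).toLin' := fun i => by
    rw [G.range_toLin'_lapMatrix hG, LinearMap.mem_ker, Fintype.linearCombination_apply]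
    simpa [← Finset.sum_apply] using congrFun hd i
  choose w hw using hrange
  refine ⟨fun v i => w i v, fun v => funext fun i => ?_⟩
  have := congrFun (hw i) v
  rw [toLin'_apply, lapMatrix_mulVec_apply_eq_sum_neighborFinset_sub] at this
  simpa [Finset.sum_apply] using this

end SimpleGraph

theorem decoupling_coupled_constraint_general
    {V : Type*} [Fintype V]
    (G : SimpleGraph V) [DecidableRel G.Adj] (hG : G.Connected)
    (r : ℕ) (n : V → ℕ)
    (A : (v : V) → Matrix (Fin r) (Fin (n v)) ℝ)
    (x : (v : V) → Fin (n v) → ℝ)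
    (c : Fin r → ℝ) (C : V → Fin r → ℝ) (hC : ∑ v, C v = c) :
    (∑ v, (A v).mulVec (x v)) + c ≤ 0 ↔
      ∃ z : V → Fin r → ℝ, ∀ v : V,
        (A v).mulVec (x v) + (∑ u ∈ G.neighborFinset v, (z v - z u)) + C v ≤ 0 := by
  set s := (∑ v, (A v).mulVec (x v)) + c
  constructor
  · intro hs
    set share := (Fintype.card V : ℝ)⁻¹ • s
    have hshare : ∑ _v : V, share = s := by
      have := hG.nonempty
      have : (Fintype.card V : ℝ) ≠ 0 := Nat.cast_ne_zero.2 (Fintype.card_ne_zero (α := V))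
      rw [Finset.sum_const, card_univ, ← Nat.cast_smul_eq_nsmul ℝ, smul_inv_smul₀ this]
    obtain ⟨z, hz⟩ := G.exists_forall_sum_neighborFinset_sub_eq hG
      (fun v => share - ((A v).mulVec (x v) + C v))
      (by rw [Finset.sum_sub_distrib, Finset.sum_add_distrib, hshare, hC, sub_self])
    refine ⟨z, fun v => ?_⟩
    rw [hz v, show ∀ a b : Fin r → ℝ, a + (share - (a + b)) + b = share by intros; abel]
    exact smul_nonpos_of_nonneg_of_nonpos (by positivity) hs
  · rintro ⟨z, hz⟩
    calc s = ∑ v, ((A v).mulVec (x v) + (∑ u ∈ G.neighborFinset v, (z v - z u)) + C v) := by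
          simp only [Finset.sum_add_distrib, G.sum_sum_neighborFinset_sub, add_zero, hC, s]
      _ ≤ 0 := Finset.sum_nonpos fun v _ => hz v

/-- Paper's Theorem 1, decoupling the globally coupled constraint.
Let `G` be a connected finite simple graph on a nonempty vertex set `V`, `r : ℕ`,
and for each vertex `v` let `A v` be a real `r × n v` matrix and `x v ∈ ℝ^{n v}`.
Let `c ∈ ℝ^r` and `C : V → ℝ^r` with `∑ v, C v = c`. Then
`∑ v, A v *ᵥ x v + c ≤ 0` componentwise iff there exists `z : V → ℝ^r` such that
for every `v`, `A v *ᵥ x v + ∑_{u ∈ N(v)} (z v - z u) + C v ≤ 0` componentwise. -/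
theorem decoupling_coupled_constraint
    {V : Type*} [Fintype V] [Nonempty V] [DecidableEq V]
    (G : SimpleGraph V) [DecidableRel G.Adj] (hG : G.Connected)
    (r : ℕ) (n : V → ℕ)
    (A : (v : V) → Matrix (Fin r) (Fin (n v)) ℝ)
    (x : (v : V) → Fin (n v) → ℝ)
    (c : Fin r → ℝ) (C : V → Fin r → ℝ) (hC : ∑ v, C v = c) :
    (∑ v, (A v).mulVec (x v)) + c ≤ 0 ↔
      ∃ z : V → Fin r → ℝ, ∀ v : V,
        (A v).mulVec (x v) + (∑ u ∈ G.neighborFinset v, (z v - z u)) + C v ≤ 0 :=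
  decoupling_coupled_constraint_general G hG r n A x c C hC
end

section
/- Let G be a connected finite simple graph on a nonempty vertex set V with Laplacian matrix L (indexed by V × V). Fix r ∈ ℕ. For each v ∈ V, let n_v ∈ ℕ, A_v a real r × n_v matrix, and x_v ∈ ℝ^{n_v}. Let C : V → ℝ^r. If ∑_{v ∈ V} (A_v x_v + C_v) ≤ 0 (componentwise), then there exists z : V → ℝ^r such that for every v ∈ V, A_v x_v + ∑_{u ∈ V} L_{v,u} · z_u + C_v ≤ 0 (componentwise). -/
/-!
Put `b v = A v x v + C v` and let `m` be the mean of the `b v`, so `m ≤ 0`. On a connected graph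
the kernel of the Laplacian `L` consists of the constants, so its range has codimension one; as `L`
is symmetric with zero row sums, that range is exactly the hyperplane of vectors with zero sum.
Applied coordinatewise to `v ↦ m - b v`, this gives `z` with `(L z) v = m - b v`, hence
`b v + (L z) v = m ≤ 0`.
-/

open Matrix

namespace SimpleGraph

variable {V : Type*} [Fintype V] [DecidableEq V] (G : SimpleGraph V) [DecidableRel G.Adj]

theorem sum_lapMatrix_mulVec {R : Type*} [CommRing R] (z : V → R) :
    ∑ v, (G.lapMatrix R *ᵥ z) v = 0 := by
  calc ∑ v, (G.lapMatrix R *ᵥ z) v = (fun _ ↦ 1) ⬝ᵥ (G.lapMatrix R *ᵥ z) := by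
        simp [dotProduct]
    _ = (G.lapMatrix R *ᵥ fun _ ↦ 1) ⬝ᵥ z := by
        rw [dotProduct_mulVec, ← vecMul_transpose, (G.isSymm_lapMatrix (R := R)).eq]
    _ = 0 := by rw [lapMatrix_mulVec_const_eq_zero, zero_dotProduct]

theorem finrank_ker_toLin'_lapMatrix_of_connected (hG : G.Connected) :
    Module.finrank ℝ (LinearMap.ker (toLin' (G.lapMatrix ℝ))) = 1 := by
  rw [← card_connectedComponent_eq_finrank_ker_toLin'_lapMatrix]
  have := hG.nonempty
  exact le_antisymm
    (Fintype.card_le_one_iff_subsingleton.mpr hG.preconnected.subsingleton_connectedComponent)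
    Fintype.card_pos

theorem mem_range_toLin'_lapMatrix_iff (hG : G.Connected) {w : V → ℝ} :
    w ∈ LinearMap.range (toLin' (G.lapMatrix ℝ)) ↔ ∑ v, w v = 0 := by
  have := hG.nonempty
  let total : (V → ℝ) →ₗ[ℝ] ℝ := ∑ v, LinearMap.proj v
  suffices LinearMap.range (toLin' (G.lapMatrix ℝ)) = LinearMap.ker total by simp [this, total]
  have hsub : LinearMap.range (toLin' (G.lapMatrix ℝ)) ≤ LinearMap.ker total := by
    rintro _ ⟨z, rfl⟩
    simpa [total] using G.sum_lapMatrix_mulVec z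
  have hne : LinearMap.ker total ≠ ⊤ := fun htop ↦ by
    have h1 : (fun _ ↦ (1 : ℝ)) ∈ LinearMap.ker total := by simp [htop]
    simp [total, Fintype.card_ne_zero] at h1
  have hrange := (toLin' (G.lapMatrix ℝ)).finrank_range_add_finrank_ker
  have hker := Submodule.finrank_lt hne
  rw [G.finrank_ker_toLin'_lapMatrix_of_connected hG] at hrange
  rw [Module.finrank_fintype_fun_eq_card] at hrange hker
  exact Submodule.eq_of_le_of_finrank_le hsub (by omega)

theorem exists_sum_lapMatrix_smul_eq (hG : G.Connected) {ι : Type*} (w : V → ι → ℝ)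
    (hw : ∑ v, w v = 0) : ∃ z : V → ι → ℝ, ∀ v, ∑ u, G.lapMatrix ℝ v u • z u = w v := by
  have hcoord (i : ι) : ∃ zi : V → ℝ, G.lapMatrix ℝ *ᵥ zi = fun v ↦ w v i := by
    have hi : (fun v ↦ w v i) ∈ LinearMap.range (toLin' (G.lapMatrix ℝ)) :=
      (G.mem_range_toLin'_lapMatrix_iff hG).mpr (by simpa [Finset.sum_apply] using congrFun hw i)
    simpa using hi
  choose zi hzi using hcoord
  refine ⟨fun u i ↦ zi i u, fun v ↦ funext fun i ↦ ?_⟩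
  simpa [Finset.sum_apply, mulVec, dotProduct] using congrFun (hzi i) v

end SimpleGraph

theorem decoupling_forward_general
    {V : Type*} [Fintype V] [DecidableEq V]
    (G : SimpleGraph V) [DecidableRel G.Adj] (hG : G.Connected)
    (r : ℕ) (n : V → ℕ)
    (A : (v : V) → Matrix (Fin r) (Fin (n v)) ℝ)
    (x : (v : V) → Fin (n v) → ℝ)
    (C : V → Fin r → ℝ)
    (h : ∑ v, ((A v).mulVec (x v) + C v) ≤ 0) :
    ∃ z : V → Fin r → ℝ, ∀ v : V,
      (A v).mulVec (x v) + (∑ u, (G.lapMatrix ℝ) v u • z u) + C v ≤ 0 := by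
  have := hG.nonempty
  set b : V → Fin r → ℝ := fun v ↦ (A v).mulVec (x v) + C v
  set mean : Fin r → ℝ := (Fintype.card V : ℝ)⁻¹ • ∑ v, b v
  have hsum : ∑ v, (mean - b v) = 0 := by
    rw [Finset.sum_sub_distrib, Finset.sum_const, Finset.card_univ, ← Nat.cast_smul_eq_nsmul ℝ,
      smul_inv_smul₀ (by positivity), sub_self]
  obtain ⟨z, hz⟩ := G.exists_sum_lapMatrix_smul_eq hG (fun v ↦ mean - b v) hsum
  refine ⟨z, fun v ↦ ?_⟩
  calc (A v).mulVec (x v) + (∑ u, (G.lapMatrix ℝ) v u • z u) + C v = mean := by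
        rw [hz v]; simp only [b]; abel
    _ ≤ 0 := smul_nonpos_of_nonneg_of_nonpos (by positivity) h

/-- forward direction of the paper's Theorem 1.
If `G` is a connected finite simple graph with Laplacian `L` and
`∑ v, (A v *ᵥ x v + C v) ≤ 0` componentwise, then there exists `z : V → ℝ^r`
such that for every `v`, `A v *ᵥ x v + ∑ u, L v u • z u + C v ≤ 0` componentwise. -/
theorem decoupling_forward
    {V : Type*} [Fintype V] [Nonempty V] [DecidableEq V]
    (G : SimpleGraph V) [DecidableRel G.Adj] (hG : G.Connected)
    (r : ℕ) (n : V → ℕ)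
    (A : (v : V) → Matrix (Fin r) (Fin (n v)) ℝ)
    (x : (v : V) → Fin (n v) → ℝ)
    (C : V → Fin r → ℝ)
    (h : ∑ v, ((A v).mulVec (x v) + C v) ≤ 0) :
    ∃ z : V → Fin r → ℝ, ∀ v : V,
      (A v).mulVec (x v) + (∑ u, (G.lapMatrix ℝ) v u • z u) + C v ≤ 0 :=
  decoupling_forward_general G hG r n A x C h
end

section
/- Let N, M ∈ ℕ. Let f : ℝ^N → ℝ be convex and differentiable, and let g : ℝ^N → ℝ^M have each component g_j convex and differentiable. Define the Lagrangian 𝓛(η, λ) = f(η) + ⟨λ, g(η)⟩ for η ∈ ℝ^N, λ ∈ ℝ^M. For a, b ∈ ℝ define [a]_b^+ = a if b > 0 and [a]_b^+ = max(0, a) if b ≤ 0, extended componentwise to vectors. Suppose (η†, λ†) with λ† ≥ 0 componentwise is a saddle point of 𝓛 over ℝ^N × ℝ^M_{≥0}, i.e., 𝓛(η†, λ) ≤ 𝓛(η†, λ†) ≤ 𝓛(η, λ†) for all η ∈ ℝ^N and all λ ≥ 0. Then for every η ∈ ℝ^N and every λ ∈ ℝ^M with λ ≥ 0 componentwise: −⟨η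 − η†, ∇f(η) + ∑_{j=1}^M λ_j ∇g_j(η)⟩ + ⟨λ − λ†, [g(η)]_λ^+⟩ ≤ 0. -/
open scoped RealInnerProductSpace

/-- The projection operator `[a]_b^+`: equal to `a` if `b > 0`,
and to `max 0 a` otherwise. -/
noncomputable def posProj (a b : ℝ) : ℝ := if 0 < b then a else max 0 a

/-!
Write `𝓛(η, λ) = f η + ∑ⱼ λⱼ gⱼ η`. For fixed `λ ≥ 0` the map `𝓛(·, λ)` is convex, so its
gradient inequality at `η` gives `-⟨η - η†, ∇_η 𝓛(η, λ)⟩ ≤ 𝓛(η†, λ) - 𝓛(η, λ)`. Since the projection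
acts only where `λⱼ = 0`, and `λ† ≥ 0`, we have `(λⱼ - λ†ⱼ) [gⱼ η]_{λⱼ}^+ ≤ (λⱼ - λ†ⱼ) gⱼ η`; these
bounds sum to `𝓛(η, λ) - 𝓛(η, λ†)`. The left-hand side is therefore at most `𝓛(η†, λ) - 𝓛(η, λ†)`,
which the two saddle-point inequalities make nonpositive.
-/

section Convex

variable {𝕜 E β ι : Type*} [Semiring 𝕜] [PartialOrder 𝕜] [AddCommMonoid E] [Module 𝕜 E]
  [AddCommMonoid β] [PartialOrder β] [IsOrderedAddMonoid β] [Module 𝕜 β]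

theorem ConvexOn.fun_sum {s : Set E} (hs : Convex 𝕜 s) (t : Finset ι) {f : ι → E → β}
    (hf : ∀ i ∈ t, ConvexOn 𝕜 s (f i)) : ConvexOn 𝕜 s fun x => ∑ i ∈ t, f i x := by
  classical
  induction t using Finset.induction_on with
  | empty => simpa using convexOn_const (0 : β) hs
  | insert i t hi ih =>
    simp only [Finset.sum_insert hi]
    exact (hf i (t.mem_insert_self i)).add (ih fun j hj => hf j (Finset.mem_insert_of_mem hj))

end Convex

theorem ConvexOn.add_le_of_hasFDerivAt {E : Type*} [NormedAddCommGroup E] [NormedSpace ℝ E]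
    {s : Set E} {f : E → ℝ} {f' : E →L[ℝ] ℝ} {x y : E} (hf : ConvexOn ℝ s f) (hx : x ∈ s)
    (hy : y ∈ s) (hf' : HasFDerivAt f f' x) : f x + f' (y - x) ≤ f y := by
  have hline : ConvexOn ℝ (AffineMap.lineMap x y ⁻¹' s) (f ∘ AffineMap.lineMap (k := ℝ) x y) :=
    hf.comp_affineMap _
  have hderiv : HasDerivAt (f ∘ AffineMap.lineMap (k := ℝ) x y) (f' (y - x)) 0 := by
    rw [← AffineMap.lineMap_apply_zero x y (k := ℝ)] at hf'
    exact hf'.comp_hasDerivAt 0 AffineMap.hasDerivAt_lineMap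
  have hslope :=
    hline.le_slope_of_hasDerivAt (by simpa using hx) (by simpa using hy) zero_lt_one hderiv
  rw [slope_def_field, Function.comp_apply, Function.comp_apply, AffineMap.lineMap_apply_one,
    AffineMap.lineMap_apply_zero, sub_zero, div_one] at hslope
  linarith

theorem ConvexOn.add_inner_le_of_hasGradientAt {F : Type*} [NormedAddCommGroup F]
    [InnerProductSpace ℝ F] [CompleteSpace F] {s : Set F} {f : F → ℝ} {f' x y : F}
    (hf : ConvexOn ℝ s f) (hx : x ∈ s) (hy : y ∈ s) (hf' : HasGradientAt f f' x) :
    f x + ⟪f', y - x⟫ ≤ f y := by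
  simpa using hf.add_le_of_hasFDerivAt hx hy (hasGradientAt_iff_hasFDerivAt.mp hf')

section Gradient

variable {F ι : Type*} [NormedAddCommGroup F] [InnerProductSpace ℝ F] [CompleteSpace F]
  {f g : F → ℝ} {f' g' x : F}

theorem HasGradientAt.add (hf : HasGradientAt f f' x) (hg : HasGradientAt g g' x) :
    HasGradientAt (fun y => f y + g y) (f' + g') x := by
  rw [hasGradientAt_iff_hasFDerivAt, map_add]
  exact (hasGradientAt_iff_hasFDerivAt.mp hf).add (hasGradientAt_iff_hasFDerivAt.mp hg)

theorem HasGradientAt.const_mul (hf : HasGradientAt f f' x) (c : ℝ) :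
    HasGradientAt (fun y => c * f y) (c • f') x := by
  rw [hasGradientAt_iff_hasFDerivAt, map_smul]
  exact (hasGradientAt_iff_hasFDerivAt.mp hf).const_mul c

theorem HasGradientAt.fun_sum {t : Finset ι} {A : ι → F → ℝ} {A' : ι → F}
    (h : ∀ i ∈ t, HasGradientAt (A i) (A' i) x) :
    HasGradientAt (fun y => ∑ i ∈ t, A i y) (∑ i ∈ t, A' i) x := by
  rw [hasGradientAt_iff_hasFDerivAt, map_sum]
  exact HasFDerivAt.fun_sum fun i hi => hasGradientAt_iff_hasFDerivAt.mp (h i hi)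

end Gradient

theorem sub_mul_posProj_le {a b c : ℝ} (hb : 0 ≤ b) (hc : 0 ≤ c) :
    (b - c) * posProj a b ≤ (b - c) * a := by
  unfold posProj
  split_ifs with hpos
  · exact le_rfl
  · obtain rfl : b = 0 := le_antisymm (not_lt.mp hpos) hb
    nlinarith [le_max_right 0 a]

section Lagrangian

variable {E : Type*} {M : ℕ} (f : E → ℝ) (g : E → Fin M → ℝ)

def lagrangian (η : E) (lam : Fin M → ℝ) : ℝ := f η + ∑ j, lam j * g η j

theorem lagrangian_sub_lagrangian (η : E) (lam lam' : Fin M → ℝ) :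
    lagrangian f g η lam - lagrangian f g η lam' = ∑ j, (lam j - lam' j) * g η j := by
  simp only [lagrangian, sub_mul, Finset.sum_sub_distrib]
  ring

variable {f g}

theorem convexOn_lagrangian [AddCommGroup E] [Module ℝ E] {s : Set E} (hs : Convex ℝ s)
    (hf : ConvexOn ℝ s f) (hg : ∀ j, ConvexOn ℝ s fun η => g η j) {lam : Fin M → ℝ}
    (hlam : 0 ≤ lam) : ConvexOn ℝ s fun η => lagrangian f g η lam :=
  hf.add <| ConvexOn.fun_sum hs _ fun j _ => by simpa using (hg j).smul (hlam j)

theorem hasGradientAt_lagrangian [NormedAddCommGroup E] [InnerProductSpace ℝ E] [CompleteSpace E]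
    (hf : Differentiable ℝ f) (hg : ∀ j, Differentiable ℝ fun η => g η j) (η : E)
    (lam : Fin M → ℝ) :
    HasGradientAt (fun η' => lagrangian f g η' lam)
      (gradient f η + ∑ j, lam j • gradient (fun η' => g η' j) η) η :=
  (hf η).hasGradientAt.add <| HasGradientAt.fun_sum fun j _ =>
    ((hg j) η).hasGradientAt.const_mul (lam j)

end Lagrangian

/-- the Lyapunov function is nonincreasing along the projected
saddle-point flow; central estimate in the appendix proof of the paper's
Theorem 2(b). Let `f : ℝ^N → ℝ` be convex and differentiable and `g : ℝ^N → ℝ^M`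
have convex differentiable components, with Lagrangian
`𝓛(η, λ) = f η + ⟨λ, g η⟩`. If `(η†, λ†)` with `λ† ≥ 0` is a saddle point of `𝓛`
over `ℝ^N × ℝ^M_{≥0}`, then for all `η` and all `λ ≥ 0`,
`−⟨η − η†, ∇f(η) + ∑ j, λ j • ∇g_j(η)⟩ + ⟨λ − λ†, [g η]_λ^+⟩ ≤ 0`. -/
theorem saddle_point_lyapunov_derivative_nonpos
    (N M : ℕ)
    (f : EuclideanSpace ℝ (Fin N) → ℝ)
    (g : EuclideanSpace ℝ (Fin N) → Fin M → ℝ)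
    (hf : ConvexOn ℝ Set.univ f) (hfd : Differentiable ℝ f)
    (hg : ∀ j, ConvexOn ℝ Set.univ (fun η => g η j))
    (hgd : ∀ j, Differentiable ℝ (fun η => g η j))
    (ηd : EuclideanSpace ℝ (Fin N)) (lamd : Fin M → ℝ) (hlamd : 0 ≤ lamd)
    (hsaddle₁ : ∀ lam : Fin M → ℝ, 0 ≤ lam →
      f ηd + ∑ j, lam j * g ηd j ≤ f ηd + ∑ j, lamd j * g ηd j)
    (hsaddle₂ : ∀ η : EuclideanSpace ℝ (Fin N),
      f ηd + ∑ j, lamd j * g ηd j ≤ f η + ∑ j, lamd j * g η j)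
    (η : EuclideanSpace ℝ (Fin N)) (lam : Fin M → ℝ) (hlam : 0 ≤ lam) :
    -⟪η - ηd, gradient f η + ∑ j, lam j • gradient (fun η' => g η' j) η⟫
      + ∑ j, (lam j - lamd j) * posProj (g η j) (lam j) ≤ 0 := by
  have hdescent := (convexOn_lagrangian convex_univ hf hg hlam).add_inner_le_of_hasGradientAt
    (Set.mem_univ η) (Set.mem_univ ηd) (hasGradientAt_lagrangian hfd hgd η lam)
  have hproj : ∑ j, (lam j - lamd j) * posProj (g η j) (lam j)
      ≤ lagrangian f g η lam - lagrangian f g η lamd := by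
    rw [lagrangian_sub_lagrangian]
    exact Finset.sum_le_sum fun j _ => sub_mul_posProj_le (hlam j) (hlamd j)
  rw [real_inner_comm, ← neg_sub η ηd, inner_neg_left] at hdescent
  have h₁ : lagrangian f g ηd lam ≤ lagrangian f g ηd lamd := hsaddle₁ lam hlam
  have h₂ : lagrangian f g ηd lamd ≤ lagrangian f g η lamd := hsaddle₂ η
  linarith
end
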